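/- Let f ∈ ℤ[X] and let d = 2 or d = −2. For every natural number n ≥ 1, the integer d^{⌊n/2⌋} divides the polynomial N_n(f^2 + d, f) in ℤ[X] (i.e., it divides every coefficient), and likewise d^{⌊n/2⌋} divides D_n(f^2 + d, f) in ℤ[X]. -/
import Mathlib


/-- The Rédei polynomial `N_n(α, z) = ∑_{k=0}^{⌊n/2⌋} C(n, 2k) α^k z^(n-2k)`. -/
def redeiN {R : Type*} [CommRing R] (n : ℕ) (α z : R) : R :=
  ∑ k ∈ Finset.range (n / 2 + 1), (n.choose (2 * k) : R) * α ^ k * z ^ (n - 2 * k)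

/-- The Rédei polynomial `D_n(α, z) = ∑_{k=0}^{⌊n/2⌋} C(n, 2k+1) α^k z^(n-2k-1)`. -/
def redeiD {R : Type*} [CommRing R] (n : ℕ) (α z : R) : R :=
  ∑ k ∈ Finset.range (n / 2 + 1), (n.choose (2 * k + 1) : R) * α ^ k * z ^ (n - 2 * k - 1)


lemma redeiN_ext {R : Type*} [CommRing R] (n M : ℕ) (hM : n / 2 + 1 ≤ M) (α z : R) :
    redeiN n α z = ∑ k ∈ Finset.range M, (n.choose (2 * k) : R) * α ^ k * z ^ (n - 2 * k) := by
  rw [redeiN]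
  refine Finset.sum_subset (Finset.range_subset_range.mpr hM) ?_
  intro k _ hk'
  simp only [Finset.mem_range, not_lt] at hk'
  rw [Nat.choose_eq_zero_of_lt (by omega)]
  simp

lemma redeiD_ext {R : Type*} [CommRing R] (n M : ℕ) (hM : n / 2 + 1 ≤ M) (α z : R) :
    redeiD n α z = ∑ k ∈ Finset.range M, (n.choose (2 * k + 1) : R) * α ^ k * z ^ (n - 2 * k - 1) := by
  rw [redeiD]
  refine Finset.sum_subset (Finset.range_subset_range.mpr hM) ?_
  intro k _ hk'
  simp only [Finset.mem_range, not_lt] at hk'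
  rw [Nat.choose_eq_zero_of_lt (by omega)]
  simp

lemma redeiD_succ {R : Type*} [CommRing R] (n : ℕ) (α z : R) :
    redeiD (n + 1) α z = redeiN n α z + z * redeiD n α z := by
  rw [redeiD_ext (n+1) (n/2+2) (by omega) α z, redeiN_ext n (n/2+2) (by omega) α z,
    redeiD_ext n (n/2+2) (by omega) α z, Finset.mul_sum, ← Finset.sum_add_distrib]
  refine Finset.sum_congr rfl fun k _ => ?_
  have h1 : (n+1).choose (2*k+1) = n.choose (2*k) + n.choose (2*k+1) := Nat.choose_succ_succ n (2*k)
  have h2 : n + 1 - 2*k - 1 = n - 2*k := by omega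
  rw [h1, h2]
  push_cast
  rcases le_or_gt (2*k+1) n with h | h
  · have h3 : z ^ (n - 2*k) = z * z ^ (n - 2*k - 1) := by
      rw [← pow_succ']; congr 1; omega
    rw [h3]; ring
  · rw [Nat.choose_eq_zero_of_lt h]
    push_cast
    ring

lemma redeiN_succ {R : Type*} [CommRing R] (n : ℕ) (α z : R) :
    redeiN (n + 1) α z = z * redeiN n α z + α * redeiD n α z := by
  have key : ∀ k : ℕ, ((n+1).choose (2*(k+1)) : R) * α^(k+1) * z^(n+1-2*(k+1)) =
      z * ((n.choose (2*(k+1)) : R) * α^(k+1) * z^(n-2*(k+1))) +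
      α * ((n.choose (2*k+1) : R) * α^k * z^(n-2*k-1)) := by
    intro k
    have h1 : (n+1).choose (2*(k+1)) = n.choose (2*k+1) + n.choose (2*(k+1)) := by
      rw [show 2*(k+1) = (2*k+1)+1 by ring]
      exact Nat.choose_succ_succ n (2*k+1)
    have h2 : n + 1 - 2*(k+1) = n - 2*k - 1 := by omega
    rw [h1, h2]
    push_cast
    rcases le_or_gt (2*(k+1)) n with h | h
    · have h3 : z ^ (n - 2*k - 1) = z * z ^ (n - 2*(k+1)) := by
        rw [← pow_succ']; congr 1; omega
      rw [h3]; ring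
    · rw [Nat.choose_eq_zero_of_lt h]
      push_cast; ring
  have hL : redeiN (n+1) α z =
      (∑ k ∈ Finset.range (n/2+1), ((n+1).choose (2*(k+1)) : R) * α^(k+1) * z^(n+1-2*(k+1)))
        + z^(n+1) := by
    rw [redeiN_ext (n+1) (n/2+1+1) (by omega) α z, Finset.sum_range_succ']
    congr 1
    norm_num
  have hN : z * redeiN n α z =
      (∑ k ∈ Finset.range (n/2+1), z * ((n.choose (2*(k+1)) : R) * α^(k+1) * z^(n-2*(k+1))))
        + z * z^n := by
    rw [redeiN_ext n (n/2+1+1) (by omega) α z, Finset.sum_range_succ', mul_add, Finset.mul_sum]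
    congr 1
    norm_num
  have hD : α * redeiD n α z =
      ∑ k ∈ Finset.range (n/2+1), α * ((n.choose (2*k+1) : R) * α^k * z^(n-2*k-1)) := by
    rw [redeiD, Finset.mul_sum]
  rw [hL, hN, hD, Finset.sum_congr rfl (fun k _ => key k), Finset.sum_add_distrib, pow_succ]
  ring


open Polynomial in
/-- For `d = 2` or `d = −2` and every `n ≥ 1`, the integer `d^{⌊n/2⌋}` divides every coefficient
of `N_n(f² + d, f)` and of `D_n(f² + d, f)` in `ℤ[X]`. -/
theorem redei_divisibility (f : Polynomial ℤ) (d : ℤ) (hd : d = 2 ∨ d = -2)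
    (n : ℕ) (hn : 1 ≤ n) :
    C (d ^ (n / 2)) ∣ redeiN n (f ^ 2 + C d) f ∧
    C (d ^ (n / 2)) ∣ redeiD n (f ^ 2 + C d) f := by
  obtain ⟨e, he⟩ : d ∣ 2 := by rcases hd with h | h <;> simp [h]
  suffices H : ∀ m, 1 ≤ m → (C (d ^ (m / 2)) ∣ redeiN m (f ^ 2 + C d) f ∧
      C (d ^ (m / 2)) ∣ redeiD m (f ^ 2 + C d) f ∧
      C (d ^ ((m + 1) / 2)) ∣ redeiN m (f ^ 2 + C d) f + f * redeiD m (f ^ 2 + C d) f) by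
    exact ⟨(H n hn).1, (H n hn).2.1⟩
  intro m hm
  induction m with
  | zero => omega
  | succ k ih =>
    rcases Nat.lt_or_ge k 1 with hk | hk
    · -- base case k = 0, m = 1
      interval_cases k
      have hN1 : redeiN 1 (f ^ 2 + C d) f = f := by
        simp [redeiN]
      have hD1 : redeiD 1 (f ^ 2 + C d) f = 1 := by
        simp [redeiD]
      refine ⟨by simp [hN1], by simp [hD1], ?_⟩
      rw [hN1, hD1]
      refine ⟨C e * f, ?_⟩
      have h2 : (C (2 : ℤ) : Polynomial ℤ) = C d * C e := by rw [← C_mul, ← he]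
      have : f + f * 1 = C 2 * f := by
        simp
        ring
      rw [this, h2]
      norm_num
      ring
    · obtain ⟨h1, h2, h3⟩ := ih hk
      set α : Polynomial ℤ := f ^ 2 + C d with hα
      set N := redeiN k α f with hN
      set D := redeiD k α f with hD
      have eN : redeiN (k + 1) α f = f * (N + f * D) + C d * D := by
        rw [redeiN_succ, hα]
        ring
      have eD : redeiD (k + 1) α f = N + f * D := by
        rw [redeiD_succ]
      -- C d * D divisible by d^(k/2+1)
      obtain ⟨q, hq⟩ := h2
      have hCdD : C (d ^ (k / 2 + 1)) ∣ C d * D := by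
        exact ⟨q, by rw [hq, pow_succ, map_mul]; ring⟩
      obtain ⟨s, hs⟩ := h3
      have hS : C (d ^ ((k + 1) / 2)) ∣ N + f * D := ⟨s, hs⟩
      have hmono : ∀ a b : ℕ, a ≤ b → C (d ^ a) ∣ (C (d ^ b) : Polynomial ℤ) :=
        fun a b hab => map_dvd C (pow_dvd_pow d hab)
      refine ⟨?_, ?_, ?_⟩
      · rw [eN]
        exact dvd_add (hS.mul_left f) ((hmono _ _ (by omega)).trans hCdD)
      · rw [eD]; exact hS
      · rw [eN, eD]
        have goal_eq : f * (N + f * D) + C d * D + f * (N + f * D) =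
            C 2 * (f * (N + f * D)) + C d * D := by
          norm_num
          ring
        rw [goal_eq]
        have h2f : C (d ^ ((k + 1 + 1) / 2)) ∣ C 2 * (f * (N + f * D)) := by
          have : C (d ^ ((k + 1) / 2 + 1)) ∣ C 2 * (f * (N + f * D)) :=
            ⟨C e * (f * s), by rw [hs, he, pow_succ, map_mul, map_mul]; ring⟩
          exact (hmono _ _ (by omega)).trans this
        exact dvd_add h2f ((hmono _ _ (by omega)).trans hCdD)
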